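/- arXiv:1705.02756 — 3 statements merged into one kernel-verified Lean document; each statement's English description precedes it below -/
import Mathlib

section
/- For all real numbers a and b with |b| ≥ |a|, ∫₀^{2π} exp(a·cos θ + i·b·sin θ) dθ = 2π · Σ_{m=0}^∞ ((−1)^m / (m!)²) · ((b² − a²)/4)^m, i.e. the integral equals 2π·J₀(√(b² − a²)) where J₀ is the Bessel function of order zero given by its power series. -/
/-!
With `u = (a + b) / 2` and `v = (a - b) / 2` the exponent is `a cos θ + i b sin θ = u e^{iθ} + v e^{-iθ}`.
Expanding `exp` into its power series (uniformly convergent on `[0, 2π]`) and each power binomially,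
only the constant Fourier mode `e^{0}` survives integration, and it occurs only in even powers:
`∫ (u e^{iθ} + v e^{-iθ})^{2m} = 2π (2m choose m) (uv)^m`. Dividing by `(2m)!` gives `2π (uv)^m / (m!)^2`,
and `uv = -(b² - a²) / 4`.
-/

open Complex Nat Finset
open scoped Real

theorem hasSum_intervalIntegral_cexp {f : ℝ → ℂ} (hf : Continuous f) (a b : ℝ) :
    HasSum (fun n : ℕ => (∫ x in a..b, f x ^ n) / n !) (∫ x in a..b, cexp (f x)) := by
  let g : C(ℝ, ℂ) := ⟨f, hf⟩
  let K : TopologicalSpace.Compacts ℝ := ⟨Set.uIcc a b, isCompact_uIcc⟩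
  let F : ℕ → C(ℝ, ℂ) := fun n => (n ! : ℂ)⁻¹ • g ^ n
  have hF_norm (n : ℕ) : ‖(F n).restrict K‖ ≤ ‖g.restrict K‖ ^ n / n ! :=
    (ContinuousMap.norm_le _ (by positivity)).2 fun x => by
      simp only [ContinuousMap.restrict_apply, F, ContinuousMap.smul_apply, ContinuousMap.pow_apply,
        smul_eq_mul, norm_mul, norm_inv, norm_natCast, norm_pow]
      rw [inv_mul_eq_div]
      gcongr
      exact (g.restrict K).norm_coe_le_norm x
  have hsum := intervalIntegral.hasSum_intervalIntegral_of_summable_norm (a := a) (b := b)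
    ((Real.summable_pow_div_factorial _).of_nonneg_of_le (fun _ => norm_nonneg _) hF_norm)
  simp only [F, ContinuousMap.smul_apply, ContinuousMap.pow_apply, smul_eq_mul,
    intervalIntegral.integral_const_mul] at hsum
  have hexp (z : ℂ) : cexp z = ∑' n : ℕ, (n ! : ℂ)⁻¹ * z ^ n := by
    rw [exp_eq_exp_ℂ, NormedSpace.exp_eq_tsum ℂ]; rfl
  simp only [hexp, div_eq_inv_mul]
  exact hsum

theorem integral_exp_int_mul_mul_I (k : ℤ) :
    ∫ θ in (0 : ℝ)..2 * π, cexp (k * θ * I) = if k = 0 then 2 * (π : ℂ) else 0 := by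
  split_ifs with hk
  · simp [hk]
  have hkI : (k : ℂ) * I ≠ 0 := mul_ne_zero (Int.cast_ne_zero.mpr hk) I_ne_zero
  have hperiod : cexp (k * I * ↑(2 * π)) = 1 := by
    rw [← exp_int_mul_two_pi_mul_I k]; push_cast; ring_nf
  simp_rw [mul_right_comm _ _ I, integral_exp_mul_complex hkI, hperiod]
  simp

theorem pow_mul_exp_add_mul_exp_neg (u v : ℂ) (n : ℕ) (θ : ℝ) :
    (u * cexp (θ * I) + v * cexp (-θ * I)) ^ n
      = ∑ k ∈ range (n + 1),
          u ^ k * v ^ (n - k) * n.choose k * cexp (((k - (n - k : ℕ) : ℤ) : ℂ) * θ * I) := by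
  rw [add_pow]
  refine sum_congr rfl fun k _ => ?_
  rw [mul_pow, mul_pow, ← exp_nat_mul, ← exp_nat_mul, mul_mul_mul_comm, ← exp_add]
  push_cast
  ring_nf

theorem integral_pow_mul_exp_add_mul_exp_neg (u v : ℂ) (n : ℕ) :
    ∫ θ in (0 : ℝ)..2 * π, (u * cexp (θ * I) + v * cexp (-θ * I)) ^ n
      = ∑ k ∈ range (n + 1),
          if 2 * k = n then 2 * π * (u ^ k * v ^ (n - k) * n.choose k) else 0 := by
  simp_rw [pow_mul_exp_add_mul_exp_neg]
  rw [intervalIntegral.integral_finsetSum fun k _ =>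
    (by fun_prop : Continuous _).intervalIntegrable _ _]
  refine sum_congr rfl fun k hk => ?_
  rw [intervalIntegral.integral_const_mul, integral_exp_int_mul_mul_I]
  have hkn : k ≤ n := Nat.lt_succ_iff.mp (mem_range.mp hk)
  by_cases h : 2 * k = n
  · rw [if_pos (by omega), if_pos h]; ring
  · rw [if_neg (by omega), if_neg h, mul_zero]

theorem integral_pow_mul_exp_add_mul_exp_neg_two_mul (u v : ℂ) (m : ℕ) :
    ∫ θ in (0 : ℝ)..2 * π, (u * cexp (θ * I) + v * cexp (-θ * I)) ^ (2 * m)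
      = 2 * π * (2 * m).choose m * (u * v) ^ m := by
  simp_rw [integral_pow_mul_exp_add_mul_exp_neg, Nat.mul_left_cancel_iff two_pos, sum_ite_eq',
    mem_range, show m < 2 * m + 1 by omega, if_true, two_mul, add_tsub_cancel_right]
  ring

theorem integral_pow_mul_exp_add_mul_exp_neg_of_odd (u v : ℂ) {n : ℕ} (hn : Odd n) :
    ∫ θ in (0 : ℝ)..2 * π, (u * cexp (θ * I) + v * cexp (-θ * I)) ^ n = 0 := by
  rw [integral_pow_mul_exp_add_mul_exp_neg]
  exact sum_eq_zero fun k _ => if_neg fun h => Nat.not_even_iff_odd.2 hn ⟨k, by omega⟩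

theorem hasSum_integral_exp_mul_exp_add_mul_exp_neg (u v : ℂ) :
    HasSum (fun m : ℕ => 2 * π * ((u * v) ^ m / (m ! : ℂ) ^ 2))
      (∫ θ in (0 : ℝ)..2 * π, cexp (u * cexp (θ * I) + v * cexp (-θ * I))) := by
  have hodd : ∀ n ∉ Set.range (2 * · : ℕ → ℕ),
      (∫ θ in (0 : ℝ)..2 * π, (u * cexp (θ * I) + v * cexp (-θ * I)) ^ n) / n ! = 0 := by
    intro n hn
    have hn_odd : Odd n := Nat.not_even_iff_odd.1 fun ⟨m, hm⟩ => hn ⟨m, (two_mul m).trans hm.symm⟩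
    rw [integral_pow_mul_exp_add_mul_exp_neg_of_odd u v hn_odd, zero_div]
  have hsum := (Function.Injective.hasSum_iff (mul_right_injective₀ two_ne_zero) hodd).2
    (hasSum_intervalIntegral_cexp (by fun_prop) _ _)
  convert hsum using 2 with m
  rw [Function.comp_apply, integral_pow_mul_exp_add_mul_exp_neg_two_mul,
    Nat.cast_choose ℂ (by omega : m ≤ 2 * m), (by omega : 2 * m - m = m)]
  have : ((2 * m)! : ℂ) ≠ 0 := Nat.cast_ne_zero.2 (2 * m).factorial_ne_zero
  field_simp

theorem circle_integral_bessel_general (a b : ℝ) :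
    (∫ θ in (0:ℝ)..(2 * Real.pi),
        Complex.exp (↑(a * Real.cos θ) + Complex.I * ↑(b * Real.sin θ)))
      = 2 * Real.pi *
          ∑' m : ℕ, ((-1) ^ m / ((m.factorial : ℂ)) ^ 2) *
            (((b ^ 2 - a ^ 2) / 4 : ℝ) : ℂ) ^ m := by
  have hexponent (θ : ℝ) : (↑(a * Real.cos θ) + I * ↑(b * Real.sin θ) : ℂ)
      = (a + b) / 2 * cexp (θ * I) + (a - b) / 2 * cexp (-θ * I) := by
    rw [← ofReal_neg, exp_mul_I, exp_mul_I]
    push_cast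
    simp only [cos_neg, sin_neg]
    ring
  have hprod (m : ℕ) : ((a + b) / 2 * ((a - b) / 2) : ℂ) ^ m
      = (-1) ^ m * (((b ^ 2 - a ^ 2) / 4 : ℝ) : ℂ) ^ m := by
    rw [← mul_pow]; push_cast; ring
  simp_rw [hexponent, ← (hasSum_integral_exp_mul_exp_add_mul_exp_neg _ _).tsum_eq, tsum_mul_left,
    hprod]
  ring_nf

/-- For `|b| ≥ |a|`,
`∫₀^{2π} exp(a cos θ + i b sin θ) dθ = 2π Σ_{m=0}^∞ ((−1)^m/(m!)²) ((b² − a²)/4)^m`,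
i.e. it equals `2π J₀(√(b² − a²))` with `J₀` given by its power series. -/
theorem circle_integral_bessel (a b : ℝ) (hab : |a| ≤ |b|) :
    (∫ θ in (0:ℝ)..(2 * Real.pi),
        Complex.exp (↑(a * Real.cos θ) + Complex.I * ↑(b * Real.sin θ)))
      = 2 * Real.pi *
          ∑' m : ℕ, ((-1) ^ m / ((m.factorial : ℂ)) ^ 2) *
            (((b ^ 2 - a ^ 2) / 4 : ℝ) : ℂ) ^ m :=
  circle_integral_bessel_general a b
end

section
/- The Laurent expansion at z = 0 of the function z ↦ exp{ c [ (τ/2)(z + 1/z) + (√(τ²+k²)/2)(z − 1/z) ] } / z, where c > 0, τ > 0, k ≥ 0, has residue (coefficient of z^{−1}·z⁰ term, i.e. the constant Laurent coefficient of the exponential factor) equal to Σ_{m=0}^∞ ((−1)^m/(m!)²) (k²c²/4)^m = J₀(kc); equivalently, (1/(2πi)) ∮_{|z|=1} exp{ c [ (τ/2)(z + 1/z) + (√(τ²+k²)/2)(z − 1/z) ] } dz/z = J₀(kc). -/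
open MeasureTheory Filter Topology

/-!
Writing the exponent as `A z + B / z` with `A = c (τ + √(τ² + k²)) / 2` and
`B = c (τ - √(τ² + k²)) / 2`, multiplying the exponential series of `A z` and `B / z` gives a
Laurent series of `exp (A z + B / z) / z` that converges absolutely on every circle around `0`.
Integrating it term by term, only the terms `z⁻¹` survive; these are the diagonal terms, with
coefficients `(A B)ⁿ / (n!)²`, and `A B = -k² c² / 4`.
-/

open Complex Metric
open scoped Real Nat

namespace circleIntegral

variable {E : Type*} [NormedAddCommGroup E] [NormedSpace ℂ E] [CompleteSpace E]

theorem hasSum_of_norm_le {ι : Type*} [Countable ι] {f : ι → ℂ → E} {u : ι → ℝ} {c : ℂ}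
    {R : ℝ} (hf : ∀ i, ContinuousOn (f i) (sphere c |R|)) (hu : Summable u)
    (hfu : ∀ i, ∀ z ∈ sphere c |R|, ‖f i z‖ ≤ u i) :
    HasSum (fun i ↦ ∮ z in C(c, R), f i z) (∮ z in C(c, R), ∑' i, f i z) := by
  have hcont : ∀ i, Continuous fun θ ↦ f i (circleMap c R θ) := fun i ↦
    (hf i).comp_continuous (continuous_circleMap c R) (circleMap_mem_sphere' c R)
  refine intervalIntegral.hasSum_integral_of_dominated_convergence (fun i _ ↦ |R| * u i)
    (fun i ↦ ?_) (fun i ↦ ae_of_all _ fun θ _ ↦ ?_) (ae_of_all _ fun _ _ ↦ hu.mul_left |R|)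
    intervalIntegrable_const (ae_of_all _ fun θ _ ↦ ?_)
  · simp only [deriv_circleMap]
    exact (((continuous_circleMap 0 R).mul continuous_const).smul (hcont i)).aestronglyMeasurable
  · rw [norm_smul, deriv_circleMap, norm_mul, norm_circleMap_zero, norm_I, mul_one]
    exact mul_le_mul_of_nonneg_left (hfu i _ (circleMap_mem_sphere' c R θ)) (abs_nonneg R)
  · exact (hu.of_norm_bounded fun i ↦ hfu i _ (circleMap_mem_sphere' c R θ)).hasSum.const_smul _

theorem integral_sub_zpow (c : ℂ) {R : ℝ} (hR : 0 < R) (n : ℤ) :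
    (∮ z in C(c, R), (z - c) ^ n) = if n = -1 then 2 * π * I else 0 := by
  split_ifs with hn
  · simpa [hn, zpow_neg_one] using integral_sub_inv_of_mem_ball (mem_ball_self hR)
  · exact integral_sub_zpow_of_ne hn c c R

theorem integral_tsum_mul_sub_zpow {ι : Type*} [Countable ι] {a : ι → ℂ} {n : ι → ℤ} (c : ℂ)
    {R : ℝ} (hR : 0 < R) (ha : Summable fun i ↦ ‖a i‖ * R ^ n i) :
    (∮ z in C(c, R), ∑' i, a i * (z - c) ^ n i)
      = 2 * π * I * ∑' i, if n i = -1 then a i else 0 := by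
  have hsphere : sphere c |R| = sphere c R := by rw [abs_of_pos hR]
  have hsum := hasSum_of_norm_le (f := fun i z ↦ a i * (z - c) ^ n i) (c := c) (R := R)
    (fun i ↦ continuousOn_const.mul <| (continuousOn_id.sub continuousOn_const).zpow₀ _
      fun z hz ↦ .inl <| sub_ne_zero.2 <| ne_of_mem_sphere hz (abs_ne_zero.2 hR.ne')) ha
    (fun i z hz ↦ by
      rw [hsphere, mem_sphere_iff_norm] at hz
      rw [norm_mul, norm_zpow, hz])
  rw [← hsum.tsum_eq, ← tsum_mul_left]
  refine tsum_congr fun i ↦ ?_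
  rw [integral_const_mul, integral_sub_zpow c hR]
  split_ifs <;> ring

end circleIntegral

theorem Complex.exp_mul_add_div_div_eq_tsum (a b : ℂ) {z : ℂ} (hz : z ≠ 0) :
    exp (a * z + b / z) / z
      = ∑' p : ℕ × ℕ, a ^ p.1 / p.1 ! * (b ^ p.2 / p.2 !) * z ^ ((p.1 : ℤ) - p.2 - 1) := by
  have hsum : ∀ w : ℂ, Summable fun n : ℕ ↦ ‖w ^ n / (n ! : ℂ)‖ := fun w ↦ by
    simpa [norm_div, norm_pow] using Real.summable_pow_div_factorial ‖w‖
  have hexp : ∀ w : ℂ, exp w = ∑' n : ℕ, w ^ n / (n ! : ℂ) := fun w ↦ by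
    rw [exp_eq_exp_ℂ, NormedSpace.exp_eq_tsum_div]
  rw [exp_add, hexp, hexp, tsum_mul_tsum_of_summable_norm (hsum _) (hsum _), ← tsum_div_const]
  refine tsum_congr fun p ↦ ?_
  rw [zpow_sub₀ hz, zpow_sub₀ hz, zpow_natCast, zpow_natCast, zpow_one, mul_pow, div_pow]
  field_simp

theorem circleIntegral_exp_mul_add_div_div (a b : ℂ) {R : ℝ} (hR : 0 < R) :
    (∮ z in C(0, R), exp (a * z + b / z) / z)
      = 2 * π * I * ∑' n : ℕ, (a * b) ^ n / (n ! : ℂ) ^ 2 := by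
  have hcoeff : Summable fun p : ℕ × ℕ ↦
      ‖a ^ p.1 / p.1 ! * (b ^ p.2 / p.2 !)‖ * R ^ ((p.1 : ℤ) - p.2 - 1) := by
    refine (((Real.summable_pow_div_factorial (‖a‖ * R)).mul_of_nonneg
      (Real.summable_pow_div_factorial (‖b‖ / R)) (fun _ ↦ by positivity)
      (fun _ ↦ by positivity)).div_const R).congr fun p ↦ ?_
    rw [zpow_sub₀ hR.ne', zpow_sub₀ hR.ne', zpow_natCast, zpow_natCast, zpow_one]
    simp only [norm_mul, norm_div, norm_pow, Complex.norm_natCast, mul_pow, div_pow]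
    field_simp
  have hdiag : (∑' p : ℕ × ℕ,
      if (p.1 : ℤ) - p.2 - 1 = -1 then a ^ p.1 / p.1 ! * (b ^ p.2 / p.2 !) else 0)
        = ∑' n : ℕ, (a * b) ^ n / (n ! : ℂ) ^ 2 := by
    rw [← Function.Injective.tsum_eq (g := fun n : ℕ ↦ (n, n))
      (fun m n h ↦ congrArg Prod.fst h)]
    · refine tsum_congr fun n ↦ ?_
      simp only [sub_self, zero_sub, if_true]
      ring
    · intro p hp
      have hp' : p.1 = p.2 := by
        by_contra h
        exact hp (if_neg (by omega))
      exact ⟨p.1, Prod.ext rfl hp'⟩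
  rw [circleIntegral.integral_congr hR.le fun z hz ↦
    exp_mul_add_div_div_eq_tsum a b (ne_of_mem_sphere hz hR.ne')]
  simpa only [sub_zero, hdiag] using circleIntegral.integral_tsum_mul_sub_zpow 0 hR hcoeff

theorem residue_bessel_general (c τ k : ℝ) :
    (1 / (2 * Real.pi * Complex.I)) *
        (∮ z in C(0, 1),
          Complex.exp (↑c * (↑τ / 2 * (z + 1 / z) +
            ↑(Real.sqrt (τ ^ 2 + k ^ 2)) / 2 * (z - 1 / z))) / z)
      = ∑' m : ℕ, ((-1) ^ m / ((m.factorial : ℂ)) ^ 2) * ((k ^ 2 * c ^ 2 / 4 : ℝ) : ℂ) ^ m := by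
  set s := Real.sqrt (τ ^ 2 + k ^ 2)
  set A : ℂ := c * (τ + s) / 2
  set B : ℂ := c * (τ - s) / 2
  have hexponent : ∀ z : ℂ, c * (τ / 2 * (z + 1 / z) + s / 2 * (z - 1 / z)) = A * z + B / z :=
    fun z ↦ by ring
  have hAB : A * B = -((k ^ 2 * c ^ 2 / 4 : ℝ) : ℂ) := by
    have hs : (s : ℂ) ^ 2 = τ ^ 2 + k ^ 2 := by
      exact_mod_cast Real.sq_sqrt (by positivity : 0 ≤ τ ^ 2 + k ^ 2)
    push_cast
    linear_combination (-(c : ℂ) ^ 2 / 4) * hs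
  simp_rw [hexponent]
  rw [circleIntegral_exp_mul_add_div_div A B one_pos, ← mul_assoc, one_div,
    inv_mul_cancel₀ (by simp [Real.pi_ne_zero]), one_mul, hAB]
  refine tsum_congr fun m ↦ ?_
  rw [neg_eq_neg_one_mul, mul_pow]
  ring

/-- The residue at `z = 0` of
`exp{c[(τ/2)(z + 1/z) + (√(τ²+k²)/2)(z − 1/z)]}/z` equals
`Σ_{m=0}^∞ ((−1)^m/(m!)²)(k²c²/4)^m = J₀(kc)`; equivalently
`(1/(2πi)) ∮_{|z|=1} exp{c[(τ/2)(z + 1/z) + (√(τ²+k²)/2)(z − 1/z)]} dz/z = J₀(kc)`. -/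
theorem residue_bessel (c τ k : ℝ) (hc : 0 < c) (hτ : 0 < τ) (hk : 0 ≤ k) :
    (1 / (2 * Real.pi * Complex.I)) *
        (∮ z in C(0, 1),
          Complex.exp (↑c * (↑τ / 2 * (z + 1 / z) +
            ↑(Real.sqrt (τ ^ 2 + k ^ 2)) / 2 * (z - 1 / z))) / z)
      = ∑' m : ℕ, ((-1) ^ m / ((m.factorial : ℂ)) ^ 2) * ((k ^ 2 * c ^ 2 / 4 : ℝ) : ℂ) ^ m :=
  residue_bessel_general c τ k
end

section
/- Let p ∈ ℝ², k ≥ 0, ω ∈ S¹ with ω^⊥ its rotation by π/2, and let ε > 0 be such that ∫₀¹ r·J₀(kεr) dr ≠ 0 (which holds for all sufficiently small ε > 0). Define I_ω(τ,t) = ∫_{B(p,ε)} exp(x·(τω + i√(τ²+k²)·ω^⊥) − τt) dx. Then { t ∈ ℝ : lim_{τ→∞} I_ω(τ,t) = 0 } = (p·ω, ∞), the open half-line of t with t > p·ω. In particular, since h_{B(p,ε)}(ω) = p·ω + ε, the indicator I_ω(τ, h_{B(p,ε)}(ω)) decays exponentially as τ → ∞. -/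
open MeasureTheory Filter Topology

noncomputable section

/-- The Euclidean plane ℝ². -/
abbrev E2 : Type := EuclideanSpace ℝ (Fin 2)

/-- Rotation of a vector of ℝ² by π/2. -/
def perp (ω : E2) : E2 := (EuclideanSpace.equiv (Fin 2) ℝ).symm ![-(ω 1), ω 0]

/-- Euclidean dot product on ℝ². -/
def dotR (x y : E2) : ℝ := inner ℝ x y

/-- Support function `h_D(ω) = sup_{x ∈ D} x·ω`. -/
def suppFn (D : Set E2) (ω : E2) : ℝ := sSup ((fun x => dotR x ω) '' D)

/-- Complex plane wave `v(x) = exp(x·(τω + i√(τ²+k²) ω^⊥) − τt)`. -/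
def pw (k : ℝ) (ω : E2) (τ t : ℝ) (x : E2) : ℂ :=
  Complex.exp (↑(τ * dotR x ω - τ * t) +
    Complex.I * ↑(Real.sqrt (τ ^ 2 + k ^ 2) * dotR x (perp ω)))

/-- Indicator function `I_ω(τ,t) = ∫_D ρ(x) v(x) dx`. -/
def ind (D : Set E2) (ρ : E2 → ℝ) (k : ℝ) (ω : E2) (τ t : ℝ) : ℂ :=
  ∫ x in D, (ρ x : ℂ) * pw k ω τ t x

/-- The Bessel function of order zero, `J₀(x) = Σ_{m=0}^∞ ((−1)^m/(m!)²)(x/2)^{2m}`. -/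
def besselJ0 (x : ℝ) : ℝ :=
  ∑' m : ℕ, (-1) ^ m / ((m.factorial : ℝ)) ^ 2 * (x / 2) ^ (2 * m)

/-!
Rotating and translating the plane by `x = p + z.re • ω + z.im • ω^⊥` turns the plane wave into
`v(p) · exp(τ z.re + i√(τ²+k²) z.im)`, so `I_ω(τ,t) = 2πε² (∫₀¹ r J₀(kεr) dr) · v(p)` with
`|v(p)| = exp(τ(p·ω - t))`; everything then follows from the sign of `p·ω - t`.
The disk integral is computed in polar coordinates. Since `τ² + (i√(τ²+k²))² = -k²`, the angular
integral `∫ exp(a cos θ + b sin θ) dθ` with `a² + b² = -(kr)²` equals `2π J₀(kr)`: write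
`a cos θ + b sin θ = u e^{iθ} + v e^{-iθ}` with `uv = (a² + b²)/4` and integrate the exponential
series termwise; only the constant Fourier mode `C(2m,m) (uv)^m` of `(u e^{iθ} + v e^{-iθ})^{2m}`
survives.
-/

open scoped Real Nat

section

open Complex

theorem integral_exp_int_mul_I (m : ℤ) :
    ∫ θ in (-π)..π, exp (m * θ * I) = if m = 0 then (2 * π : ℂ) else 0 := by
  split_ifs with hm
  · simp only [hm, Int.cast_zero, zero_mul, exp_zero, intervalIntegral.integral_const,
      sub_neg_eq_add, real_smul, ofReal_add, mul_one]
    ring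
  · have hmI : (m : ℂ) * I ≠ 0 := by simp [hm]
    have hperiod : exp (m * I * π) = exp (m * I * (-π : ℝ)) := by
      rw [show (m : ℂ) * I * π = m * I * (-π : ℝ) + m * (2 * π * I) by push_cast; ring,
        exp_add, exp_int_mul_two_pi_mul_I, mul_one]
    simp_rw [mul_right_comm _ _ I]
    rw [integral_exp_mul_complex hmI, hperiod, sub_self, zero_div]

theorem integral_mul_exp_add_mul_exp_neg_pow (u v : ℂ) (n : ℕ) :
    ∫ θ in (-π)..π, (u * exp (θ * I) + v * exp (-(θ * I))) ^ n =
      ∑ j ∈ Finset.range (n + 1),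
        if 2 * j = n then 2 * π * n.choose j * u ^ j * v ^ (n - j) else 0 := by
  have hexpand (θ : ℝ) : (u * exp (θ * I) + v * exp (-(θ * I))) ^ n =
      ∑ j ∈ Finset.range (n + 1),
        u ^ j * v ^ (n - j) * n.choose j * exp (((2 * j - n : ℤ) : ℂ) * θ * I) := by
    rw [add_pow]
    refine Finset.sum_congr rfl fun j hj => ?_
    have hjn : j ≤ n := Nat.lt_succ_iff.mp (Finset.mem_range.mp hj)
    rw [mul_pow, mul_pow, ← exp_nat_mul, ← exp_nat_mul, mul_mul_mul_comm, ← exp_add]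
    push_cast [hjn]
    ring_nf
  simp_rw [hexpand]
  rw [intervalIntegral.integral_finsetSum fun j _ => (by fun_prop : Continuous _).intervalIntegrable _ _]
  refine Finset.sum_congr rfl fun j _ => ?_
  rw [intervalIntegral.integral_const_mul, integral_exp_int_mul_I]
  simp only [show (2 * j - n : ℤ) = 0 ↔ 2 * j = n by omega]
  split_ifs <;> ring

theorem hasSum_intervalIntegral_exp {f : ℝ → ℂ} (hf : Continuous f) (a b : ℝ) :
    HasSum (fun n : ℕ => ∫ θ in a..b, f θ ^ n / n !) (∫ θ in a..b, exp (f θ)) := by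
  obtain ⟨M, hM⟩ := isCompact_uIcc.exists_bound_of_continuousOn hf.continuousOn
  refine intervalIntegral.hasSum_integral_of_dominated_convergence (fun n _ => M ^ n / n !)
    (fun n => by fun_prop) (fun n => ae_of_all _ fun θ hθ => ?_)
    (ae_of_all _ fun _ _ => Real.summable_pow_div_factorial M) intervalIntegrable_const
    (ae_of_all _ fun θ _ => by
      simpa [exp_eq_exp_ℂ] using NormedSpace.expSeries_div_hasSum_exp (f θ))
  rw [norm_div, norm_pow, norm_natCast]
  gcongr
  exact hM θ (Set.uIoc_subset_uIcc hθ)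

theorem integral_exp_mul_cos_add_mul_sin (a b : ℂ) (x : ℝ) (h : a ^ 2 + b ^ 2 = -(x ^ 2 : ℝ)) :
    ∫ θ in (-π)..π, exp (a * Real.cos θ + b * Real.sin θ) = 2 * π * besselJ0 x := by
  set u := (a - b * I) / 2
  set v := (a + b * I) / 2
  have hcomb (θ : ℝ) : a * Real.cos θ + b * Real.sin θ = u * exp (θ * I) + v * exp (-(θ * I)) := by
    have hcos := two_cos (θ : ℂ)
    have hsin := two_sin (θ : ℂ)
    rw [neg_mul] at hcos hsin
    push_cast
    linear_combination (a / 2) * hcos + (b / 2) * hsin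
  have huv : u * v = -(x ^ 2 : ℝ) / 4 := by
    rw [← h]; linear_combination (-(b ^ 2) / 4) * I_sq
  have hS := hasSum_intervalIntegral_exp (f := fun θ : ℝ => u * exp (θ * I) + v * exp (-(θ * I)))
    (by fun_prop) (-π) π
  simp only [intervalIntegral.integral_div, integral_mul_exp_add_mul_exp_neg_pow] at hS
  have hdouble : Function.Injective (2 * · : ℕ → ℕ) := fun m n (h : 2 * m = 2 * n) => by omega
  rw [← hdouble.hasSum_iff fun n hn => ?odd] at hS
  case odd =>
    rw [Finset.sum_eq_zero fun j _ => if_neg fun hj => hn ⟨j, hj⟩, zero_div]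
  simp_rw [hcomb]
  rw [← hS.tsum_eq, besselJ0, ofReal_tsum, ← tsum_mul_left]
  refine tsum_congr fun m => ?_
  rw [Function.comp_apply, Finset.sum_eq_single_of_mem m (Finset.mem_range.2 (by omega))
    fun j _ hj => if_neg (by omega), if_pos rfl, show 2 * m - m = m by omega, mul_assoc _ (u ^ m),
    ← mul_pow, huv, Nat.cast_choose ℂ (by omega : m ≤ 2 * m), show 2 * m - m = m by omega]
  have := m.factorial_ne_zero
  have := (2 * m).factorial_ne_zero
  push_cast
  field_simp
  rw [neg_eq_neg_one_mul, mul_pow, pow_mul]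
  ring

end

theorem integral_ball_zero_eq_integral_polar {E : Type*} [NormedAddCommGroup E] [NormedSpace ℝ E]
    [CompleteSpace E] {g : ℂ → E} (hg : Continuous g) {ε : ℝ} (hε : 0 ≤ ε) :
    ∫ z in Metric.ball (0 : ℂ) ε, g z =
      ∫ r in 0..ε, r • ∫ θ in (-π)..π, g (Complex.polarCoord.symm (r, θ)) := by
  have hsymm : Continuous Complex.polarCoord.symm := by
    simp_rw [funext Complex.polarCoord_symm_apply]; fun_prop
  set G : ℝ × ℝ → E := fun q => q.1 • g (Complex.polarCoord.symm q)
  have hS : polarCoord.target ∩ Complex.polarCoord.symm ⁻¹' Metric.ball 0 ε =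
      Set.Ioo 0 ε ×ˢ Set.Ioo (-π) π := by
    ext ⟨r, θ⟩
    simp only [polarCoord_target, Set.mem_inter_iff, Set.mem_prod, Set.mem_preimage,
      mem_ball_zero_iff, Complex.norm_polarCoord_symm, Set.mem_Ioi, Set.mem_Ioo]
    constructor
    · rintro ⟨⟨hr, hθ⟩, hrε⟩; exact ⟨⟨hr, by rwa [abs_of_pos hr] at hrε⟩, hθ⟩
    · rintro ⟨⟨hr, hrε⟩, hθ⟩; exact ⟨⟨hr, hθ⟩, by rwa [abs_of_pos hr]⟩
  have hGint : IntegrableOn G (Set.Ioo 0 ε ×ˢ Set.Ioo (-π) π) (volume.prod volume) := by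
    exact (ContinuousOn.integrableOn_compact (isCompact_Icc.prod isCompact_Icc)
      (by fun_prop : Continuous G).continuousOn).mono_set
      (Set.prod_mono Set.Ioo_subset_Icc_self Set.Ioo_subset_Icc_self)
  calc ∫ z in Metric.ball (0 : ℂ) ε, g z
      = ∫ q in polarCoord.target, (Complex.polarCoord.symm ⁻¹' Metric.ball 0 ε).indicator G q := by
        rw [← integral_indicator Metric.isOpen_ball.measurableSet,
          ← Complex.integral_comp_polarCoord_symm]
        congr 1 with q
        by_cases hq : Complex.polarCoord.symm q ∈ Metric.ball 0 ε
        · rw [Set.indicator_of_mem hq, Set.indicator_of_mem (Set.mem_preimage.2 hq)]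
        · rw [Set.indicator_of_notMem hq, Set.indicator_of_notMem (by exact hq), smul_zero]
    _ = ∫ r in Set.Ioo 0 ε, ∫ θ in Set.Ioo (-π) π, G (r, θ) := by
        rw [setIntegral_indicator (Metric.isOpen_ball.preimage hsymm).measurableSet, hS,
          Measure.volume_eq_prod, setIntegral_prod G hGint]
    _ = ∫ r in 0..ε, r • ∫ θ in (-π)..π, g (Complex.polarCoord.symm (r, θ)) := by
        simp only [G, integral_smul, intervalIntegral.integral_of_le hε,
          intervalIntegral.integral_of_le (neg_le_self Real.pi_pos.le),
          integral_Ioc_eq_integral_Ioo]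

open Complex in
theorem integral_ball_zero_exp_re_im (a b : ℂ) (k : ℝ) (h : a ^ 2 + b ^ 2 = -(k ^ 2 : ℝ)) {ε : ℝ}
    (hε : 0 ≤ ε) :
    ∫ z in Metric.ball (0 : ℂ) ε, exp (a * z.re + b * z.im) =
      ((2 * π * ε ^ 2 * ∫ s in (0 : ℝ)..1, s * besselJ0 (k * ε * s) : ℝ) : ℂ) := by
  have hangular (r : ℝ) : ∫ θ in (-π)..π, exp (a * (Complex.polarCoord.symm (r, θ)).re +
      b * (Complex.polarCoord.symm (r, θ)).im) = ((2 * π * besselJ0 (k * r) : ℝ) : ℂ) := by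
    have hr : (a * r) ^ 2 + (b * r) ^ 2 = -((k * r) ^ 2 : ℝ) := by
      push_cast at h ⊢; linear_combination (r : ℂ) ^ 2 * h
    push_cast
    rw [← integral_exp_mul_cos_add_mul_sin _ _ _ hr]
    congr 1 with θ
    have hre : (Complex.polarCoord.symm (r, θ)).re = r * Real.cos θ := by
      simp [cos_ofReal_re]
    have him : (Complex.polarCoord.symm (r, θ)).im = r * Real.sin θ := by
      simp [sin_ofReal_re]
    rw [hre, him]
    push_cast
    ring_nf
  have hradial : ∫ r in (0 : ℝ)..ε, r * (2 * π * besselJ0 (k * r)) =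
      2 * π * ε ^ 2 * ∫ s in (0 : ℝ)..1, s * besselJ0 (k * ε * s) := by
    have hscale := intervalIntegral.smul_integral_comp_mul_left (a := 0) (b := 1)
      (fun r => r * (2 * π * besselJ0 (k * r))) ε
    rw [mul_zero, mul_one] at hscale
    rw [← hscale, smul_eq_mul, ← intervalIntegral.integral_const_mul,
      ← intervalIntegral.integral_const_mul]
    congr 1 with s
    ring_nf
  rw [integral_ball_zero_eq_integral_polar (by fun_prop) hε]
  simp_rw [hangular, real_smul, ← ofReal_mul]
  rw [intervalIntegral.integral_ofReal, hradial]

theorem perp_apply_zero (ω : E2) : perp ω 0 = -ω 1 := rfl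

theorem perp_apply_one (ω : E2) : perp ω 1 = ω 0 := rfl

theorem inner_perp_self (ω : E2) : inner ℝ (perp ω) ω = 0 := by
  rw [PiLp.inner_apply, Fin.sum_univ_two]
  simp only [RCLike.inner_apply, conj_trivial, perp_apply_zero, perp_apply_one]
  ring

theorem norm_perp (ω : E2) : ‖perp ω‖ = ‖ω‖ := by
  simp [EuclideanSpace.norm_eq, Fin.sum_univ_two, perp_apply_zero, perp_apply_one, add_comm]

theorem orthonormal_perp {ω : E2} (hω : ‖ω‖ = 1) : Orthonormal ℝ ![ω, perp ω] := by
  rw [orthonormal_iff_ite]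
  intro i j
  fin_cases i <;> fin_cases j <;>
    simp [norm_perp, hω, inner_perp_self, real_inner_comm (perp ω) ω]

def perpFrame {ω : E2} (hω : ‖ω‖ = 1) : ℂ ≃ₗᵢ[ℝ] E2 :=
  Complex.isometryOfOrthonormal <|
    (basisOfOrthonormalOfCardEqFinrank (orthonormal_perp hω) (by simp)).toOrthonormalBasis
      (by rw [coe_basisOfOrthonormalOfCardEqFinrank]; exact orthonormal_perp hω)

theorem perpFrame_apply {ω : E2} (hω : ‖ω‖ = 1) (z : ℂ) :
    perpFrame hω z = z.re • ω + z.im • perp ω := by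
  simp [perpFrame, Complex.isometryOfOrthonormal_apply, coe_basisOfOrthonormalOfCardEqFinrank]

theorem LinearIsometryEquiv.setIntegral_ball_eq_comp {F G E : Type*}
    [NormedAddCommGroup F] [InnerProductSpace ℝ F] [FiniteDimensional ℝ F]
    [MeasurableSpace F] [BorelSpace F]
    [NormedAddCommGroup G] [InnerProductSpace ℝ G] [FiniteDimensional ℝ G]
    [MeasurableSpace G] [BorelSpace G]
    [NormedAddCommGroup E] [NormedSpace ℝ E] (T : F ≃ₗᵢ[ℝ] G) (p : G) (ε : ℝ) (f : G → E) :
    ∫ x in Metric.ball p ε, f x = ∫ z in Metric.ball 0 ε, f (p + T z) := by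
  have hpre : (fun z => p + T z) ⁻¹' Metric.ball p ε = Metric.ball 0 ε := by
    ext z; simp [dist_eq_norm]
  rw [← hpre]
  exact (((measurePreserving_add_left volume p).comp T.measurePreserving).setIntegral_preimage_emb
    (T.toHomeomorph.trans (Homeomorph.addLeft p)).measurableEmbedding f _).symm

theorem dotR_add_perpFrame {ω : E2} (hω : ‖ω‖ = 1) (p : E2) (z : ℂ) :
    dotR (p + perpFrame hω z) ω = dotR p ω + z.re ∧
      dotR (p + perpFrame hω z) (perp ω) = dotR p (perp ω) + z.im := by
  simp [dotR, perpFrame_apply, inner_add_left, real_inner_smul_left, hω,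
    norm_perp, inner_perp_self, real_inner_comm (perp ω) ω]

theorem pw_add_perpFrame (k : ℝ) {ω : E2} (hω : ‖ω‖ = 1) (τ t : ℝ) (p : E2) (z : ℂ) :
    pw k ω τ t (p + perpFrame hω z) =
      pw k ω τ t p * Complex.exp (τ * z.re + Real.sqrt (τ ^ 2 + k ^ 2) * Complex.I * z.im) := by
  obtain ⟨h₁, h₂⟩ := dotR_add_perpFrame hω p z
  rw [pw, pw, h₁, h₂, ← Complex.exp_add]
  push_cast
  ring_nf

theorem ind_ball_one_eq (p : E2) (k : ℝ) {ε : ℝ} (hε : 0 ≤ ε) {ω : E2} (hω : ‖ω‖ = 1)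
    (τ t : ℝ) :
    ind (Metric.ball p ε) (fun _ => 1) k ω τ t =
      ((2 * π * ε ^ 2 * ∫ s in (0 : ℝ)..1, s * besselJ0 (k * ε * s) : ℝ) : ℂ) * pw k ω τ t p := by
  have hσ : (τ : ℂ) ^ 2 + (Real.sqrt (τ ^ 2 + k ^ 2) * Complex.I) ^ 2 = -(k ^ 2 : ℝ) := by
    have hsq : ((Real.sqrt (τ ^ 2 + k ^ 2) : ℝ) : ℂ) ^ 2 = τ ^ 2 + k ^ 2 := by
      exact_mod_cast Real.sq_sqrt (by positivity)
    push_cast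
    linear_combination -hsq + ((Real.sqrt (τ ^ 2 + k ^ 2) : ℝ) : ℂ) ^ 2 * Complex.I_sq
  simp only [ind, Complex.ofReal_one, one_mul]
  rw [(perpFrame hω).setIntegral_ball_eq_comp]
  simp_rw [pw_add_perpFrame]
  rw [integral_const_mul, integral_ball_zero_exp_re_im _ _ k hσ hε, mul_comm]

theorem norm_pw (k : ℝ) (ω : E2) (τ t : ℝ) (x : E2) :
    ‖pw k ω τ t x‖ = Real.exp (τ * (dotR x ω - t)) := by
  rw [pw, Complex.norm_exp, Complex.add_re, Complex.ofReal_re, Complex.re_mul_ofReal,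
    Complex.I_re, zero_mul, add_zero, mul_sub]

theorem image_dotR_ball (p : E2) (ε : ℝ) {ω : E2} (hω : ‖ω‖ = 1) :
    (fun x => dotR x ω) '' Metric.ball p ε = Set.Ioo (dotR p ω - ε) (dotR p ω + ε) := by
  ext y
  constructor
  · rintro ⟨x, hx, rfl⟩
    have hdist : |dotR (x - p) ω| < ε := by
      rw [mem_ball_iff_norm] at hx
      exact (abs_real_inner_le_norm _ _).trans_lt (by rwa [hω, mul_one])
    rw [dotR, inner_sub_left, abs_lt] at hdist
    exact ⟨by simp only [dotR]; linarith, by simp only [dotR]; linarith⟩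
  · rintro ⟨hlo, hhi⟩
    refine ⟨p + (y - dotR p ω) • ω, ?_, ?_⟩
    · rw [mem_ball_iff_norm, add_sub_cancel_left, norm_smul, hω, mul_one, Real.norm_eq_abs, abs_lt]
      constructor <;> linarith
    · simp [dotR, inner_add_left, real_inner_smul_left, hω]

theorem suppFn_ball (p : E2) {ε : ℝ} (hε : 0 < ε) {ω : E2} (hω : ‖ω‖ = 1) :
    suppFn (Metric.ball p ε) ω = dotR p ω + ε := by
  rw [suppFn, image_dotR_ball p ε hω, csSup_Ioo (by linarith)]

theorem tendsto_zero_iff_of_norm_eq_mul_exp {E : Type*} [NormedAddCommGroup E] {f : ℝ → E}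
    {C c : ℝ} (hC : 0 < C) (hf : ∀ τ, ‖f τ‖ = C * Real.exp (τ * c)) :
    Tendsto f atTop (𝓝 0) ↔ c < 0 := by
  rw [tendsto_zero_iff_norm_tendsto_zero, funext hf]
  constructor
  · intro hlim
    by_contra! hc
    have hge : ∀ᶠ τ in atTop, C ≤ C * Real.exp (τ * c) := by
      filter_upwards [eventually_ge_atTop 0] with τ hτ
      exact le_mul_of_one_le_right hC.le (Real.one_le_exp (mul_nonneg hτ hc))
    linarith [ge_of_tendsto hlim hge]
  · intro hc
    simpa using (Real.tendsto_exp_atBot.comp (tendsto_id.atTop_mul_const_of_neg hc)).const_mul C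

theorem disk_indicator_decay_set_general
    (p : E2) (k ε : ℝ) (hε : 0 < ε)
    (ω : E2) (hω : ‖ω‖ = 1)
    (hJ : (∫ r in (0:ℝ)..1, r * besselJ0 (k * ε * r)) ≠ 0) :
    {t : ℝ | Tendsto (fun τ : ℝ => ind (Metric.ball p ε) (fun _ => 1) k ω τ t)
        atTop (𝓝 0)} = Set.Ioi (dotR p ω) ∧
    suppFn (Metric.ball p ε) ω = dotR p ω + ε ∧
    ∃ C > (0:ℝ), ∀ τ : ℝ, 0 < τ →
      ‖ind (Metric.ball p ε) (fun _ => 1) k ω τ (suppFn (Metric.ball p ε) ω)‖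
        ≤ C * Real.exp (-(τ * ε)) := by
  set C : ℝ := 2 * π * ε ^ 2 * ∫ s in (0 : ℝ)..1, s * besselJ0 (k * ε * s)
  have hC : 0 < |C| := abs_pos.mpr (mul_ne_zero (by positivity) hJ)
  have hnorm (τ t : ℝ) : ‖ind (Metric.ball p ε) (fun _ => 1) k ω τ t‖ =
      |C| * Real.exp (τ * (dotR p ω - t)) := by
    rw [ind_ball_one_eq p k hε.le hω, norm_mul, Complex.norm_real, Real.norm_eq_abs, norm_pw]
  refine ⟨?_, suppFn_ball p hε hω, |C|, hC, fun τ _ => ?_⟩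
  · ext t
    rw [Set.mem_ofPred_eq, tendsto_zero_iff_of_norm_eq_mul_exp hC (hnorm · t), sub_neg, Set.mem_Ioi]
  · rw [hnorm, suppFn_ball p hε hω, show τ * (dotR p ω - (dotR p ω + ε)) = -(τ * ε) by ring]

/-- For a disk source `D = B(p,ε)` with density `1` and `∫₀¹ r J₀(kεr) dr ≠ 0`,
`{t | lim_{τ→∞} I_ω(τ,t) = 0} = (p·ω, ∞)`; in particular, since
`h_{B(p,ε)}(ω) = p·ω + ε`, the indicator `I_ω(τ, h_{B(p,ε)}(ω))` decays
exponentially as `τ → ∞`. -/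
theorem disk_indicator_decay_set
    (p : E2) (k ε : ℝ) (hk : 0 ≤ k) (hε : 0 < ε)
    (ω : E2) (hω : ‖ω‖ = 1)
    (hJ : (∫ r in (0:ℝ)..1, r * besselJ0 (k * ε * r)) ≠ 0) :
    {t : ℝ | Tendsto (fun τ : ℝ => ind (Metric.ball p ε) (fun _ => 1) k ω τ t)
        atTop (𝓝 0)} = Set.Ioi (dotR p ω) ∧
    suppFn (Metric.ball p ε) ω = dotR p ω + ε ∧
    ∃ C > (0:ℝ), ∀ τ : ℝ, 0 < τ →
      ‖ind (Metric.ball p ε) (fun _ => 1) k ω τ (suppFn (Metric.ball p ε) ω)‖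
        ≤ C * Real.exp (-(τ * ε)) :=
  disk_indicator_decay_set_general p k ε hε ω hω hJ
end
end
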